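/- Let A,B,C₁,C₂ ∈ SL(2,ℂ) with [A,B]·C₁·C₂ = Id, where C₁ is conjugate in SL(2,ℂ) to J₊ and C₂ is conjugate to J₋. If P ∈ SL(2,ℂ) commutes with each of A, B, C₁, C₂, then P = Id or P = −Id. -/

import Mathlib

open Matrix
open scoped commutatorElement

abbrev SL2C := Matrix.SpecialLinearGroup (Fin 2) ℂ

def Jp : SL2C := ⟨!![1, 1; 0, 1], by norm_num [Matrix.det_fin_two_of]⟩

def Jm : SL2C := ⟨!![-1, 1; 0, -1], by norm_num [Matrix.det_fin_two_of]⟩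

/-
Conjugate so that `C₁ = J₊`. An element commuting with `J₊` has the form `[[a, t], [0, a]]` with
`a² = 1`; if `t = 0` it is `±Id`. Otherwise its centralizer consists of matrices of the same shape,
which commute with each other, so `A` and `B` commute. Then `C₂ = C₁⁻¹` has trace `2`, whereas
`C₂ ∼ J₋` has trace `-2`.
-/

namespace Matrix

variable {R : Type*} [CommRing R]

theorem commute_fin_two_upper_scalar (a t b s : R) :
    Commute !![a, t; 0, a] !![b, s; 0, b] := by
  ext i j
  fin_cases i <;> fin_cases j <;> simp [mul_apply, Fin.sum_univ_two] <;> ring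

theorem commute_fin_two_upper_scalar_iff [NoZeroDivisors R] {a t : R} (ht : t ≠ 0)
    {M : Matrix (Fin 2) (Fin 2) R} :
    Commute M !![a, t; 0, a] ↔ M = !![M 0 0, M 0 1; 0, M 0 0] := by
  refine ⟨fun h => ?_, fun h => h ▸ (commute_fin_two_upper_scalar _ _ _ _).symm⟩
  have h00 := congrFun₂ h.eq 0 0
  have h01 := congrFun₂ h.eq 0 1
  simp only [Fin.isValue, mul_apply, of_apply, cons_val', cons_val_zero, cons_val_fin_one,
    Fin.sum_univ_two, cons_val_one, mul_zero, add_zero] at h00 h01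
  have h10 : M 1 0 = 0 :=
    (mul_eq_zero.mp (by linear_combination -h00 : t * M 1 0 = 0)).resolve_left ht
  have h11 : M 1 1 = M 0 0 :=
    sub_eq_zero.mp <| (mul_eq_zero.mp
      (by linear_combination -h01 : t * (M 1 1 - M 0 0) = 0)).resolve_left ht
  ext i j
  fin_cases i <;> fin_cases j <;> simp [h10, h11]

namespace SpecialLinearGroup

theorem trace_eq_of_isConj {n : Type*} [Fintype n] [DecidableEq n]
    {X Y : SpecialLinearGroup n R} (h : IsConj X Y) :
    trace (X : Matrix n n R) = trace (Y : Matrix n n R) := by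
  obtain ⟨Q, rfl⟩ := isConj_iff.mp h
  rw [coe_mul, coe_mul, trace_mul_cycle, ← coe_mul, inv_mul_cancel, coe_one, one_mul]

theorem trace_inv_fin_two (X : SpecialLinearGroup (Fin 2) R) :
    trace ((X⁻¹ : SpecialLinearGroup (Fin 2) R) : Matrix (Fin 2) (Fin 2) R) =
      trace (X : Matrix (Fin 2) (Fin 2) R) := by
  rw [coe_inv, adjugate_fin_two, trace_fin_two, trace_fin_two]
  simp [add_comm]

end SpecialLinearGroup

end Matrix

open Matrix.SpecialLinearGroup

theorem commute_of_commute_Jp {P M N : SL2C} (hPJ : Commute P Jp) (hP₁ : P ≠ 1) (hP₂ : P ≠ -1)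
    (hM : Commute P M) (hN : Commute P N) : Commute M N := by
  have hP : (P : Matrix (Fin 2) (Fin 2) ℂ) = !![P 0 0, P 0 1; 0, P 0 0] :=
    (commute_fin_two_upper_scalar_iff one_ne_zero).mp
      ((commute_map_iff coeMonoidHom_injective).mpr hPJ)
  have ht : P 0 1 ≠ 0 := by
    intro ht
    have hdet : P 0 0 * P 0 0 = 1 := by
      have := P.2
      rw [hP, det_fin_two_of] at this
      linear_combination this
    rcases mul_self_eq_one_iff.mp hdet with ha | ha
    · exact hP₁ (Subtype.ext (by rw [hP, ht, ha]; exact one_fin_two.symm))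
    · exact hP₂ (Subtype.ext (by rw [hP, ht, ha, coe_neg, coe_one, one_fin_two]; simp))
  have upper {X : SL2C} (hX : Commute P X) :
      (X : Matrix (Fin 2) (Fin 2) ℂ) = !![X 0 0, X 0 1; 0, X 0 0] :=
    (commute_fin_two_upper_scalar_iff (a := P 0 0) ht).mp <| by
      simpa only [coeMonoidHom_apply, ← hP] using
        ((commute_map_iff coeMonoidHom_injective).mpr hX).symm
  refine (commute_map_iff coeMonoidHom_injective).mp ?_
  simp only [coeMonoidHom_apply]
  rw [upper hM, upper hN]
  exact commute_fin_two_upper_scalar _ _ _ _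

theorem commute_of_commute_isConj_Jp {P C M N : SL2C} (hC : IsConj Jp C) (hPC : Commute P C)
    (hP₁ : P ≠ 1) (hP₂ : P ≠ -1) (hM : Commute P M) (hN : Commute P N) : Commute M N := by
  obtain ⟨Q, rfl⟩ := isConj_iff.mp hC
  set φ := MulAut.conj Q⁻¹
  have hφJ : φ (Q * Jp * Q⁻¹) = Jp := by simp [φ, mul_assoc]
  have hφP₂ : φ P ≠ -1 := fun h => hP₂ (by simpa [φ, mul_assoc] using congrArg φ.symm h)
  refine (commute_map_iff φ.injective).mp (commute_of_commute_Jp (hφJ ▸ hPC.map φ) ?_ hφP₂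
    (hM.map φ) (hN.map φ))
  simpa using hP₁

theorem stmt5_general (A B C₁ C₂ : SL2C)
    (h : ⁅A, B⁆ * C₁ * C₂ = 1)
    (hC₁ : IsConj Jp C₁) (hC₂ : IsConj Jm C₂)
    (P : SL2C)
    (hPA : P * A = A * P) (hPB : P * B = B * P)
    (hPC₁ : P * C₁ = C₁ * P) :
    P = 1 ∨ P = -1 := by
  by_contra! hP
  have hAB : Commute A B := commute_of_commute_isConj_Jp hC₁ hPC₁ hP.1 hP.2 hPA hPB
  rw [commutatorElement_eq_one_iff_commute.mpr hAB, one_mul] at h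
  have hC₂_eq : C₂ = C₁⁻¹ := (inv_eq_of_mul_eq_one_right h).symm
  have htrace := trace_eq_of_isConj hC₂
  rw [hC₂_eq, trace_inv_fin_two, ← trace_eq_of_isConj hC₁] at htrace
  norm_num [Jp, Jm, trace_fin_two] at htrace

/-- If `[A,B]·C₁·C₂ = Id` with `C₁ ∼ J₊` and `C₂ ∼ J₋`, then any `P` commuting with
`A, B, C₁, C₂` is `±Id`. -/
theorem stmt5 (A B C₁ C₂ : SL2C)
    (h : ⁅A, B⁆ * C₁ * C₂ = 1)
    (hC₁ : IsConj Jp C₁) (hC₂ : IsConj Jm C₂)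
    (P : SL2C)
    (hPA : P * A = A * P) (hPB : P * B = B * P)
    (hPC₁ : P * C₁ = C₁ * P) (hPC₂ : P * C₂ = C₂ * P) :
    P = 1 ∨ P = -1 :=
  stmt5_general A B C₁ C₂ h hC₁ hC₂ P hPA hPB hPC₁
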